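/- Let G be a finite group, p a prime, N a normal p-subgroup of G, and x ∈ G a p-element. Then N ≤ Sub_G(x) and Sub_{G/N}(xN) = Sub_G(x)/N. -/

import Mathlib

variable {G : Type*} [Group G]

/-- `A` is subnormal in `B`: there is a chain `A = s 0 ⊴ s 1 ⊴ ⋯ ⊴ s n = B`. -/
def IsSubnormalIn (A B : Subgroup G) : Prop :=
  ∃ (n : ℕ) (s : ℕ → Subgroup G), s 0 = A ∧ s n = B ∧
    ∀ i < n, s i ≤ s (i + 1) ∧ ∀ g ∈ s (i + 1), ∀ a ∈ s i, g * a * g⁻¹ ∈ s i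

/-- The subnormaliser `Sub_G(x)` of an element `x`. -/
def subnormalizer (x : G) : Subgroup G :=
  Subgroup.closure
    {g : G | IsSubnormalIn (Subgroup.zpowers x) (Subgroup.closure {g, x})}

/-!
Since `N` is a normal `p`-subgroup and `x` a `p`-element, `⟨x⟩N` is a `p`-group, hence nilpotent,
so `⟨x⟩` is subnormal in `⟨x⟩N`. This gives `N ≤ Sub_G(x)`. For the quotient, subnormality is
preserved by images, and pulling back `⟨xN⟩ ⊴⊴ ⟨gN, xN⟩` gives `⟨x⟩N ⊴⊴ ⟨g, x⟩N`; composing with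
`⟨x⟩ ⊴⊴ ⟨x⟩N` and intersecting with `⟨g, x⟩` shows `g ∈ Sub_G(x)`.
-/

namespace IsSubnormalIn

variable {A B C : Subgroup G}

lemma refl (A : Subgroup G) : IsSubnormalIn A A :=
  ⟨0, fun _ => A, rfl, rfl, fun _ hi => absurd hi (Nat.not_lt_zero _)⟩

lemma step (hAB : A ≤ B) (hBA : B ≤ Subgroup.normalizer (A : Set G)) (hBC : IsSubnormalIn B C) :
    IsSubnormalIn A C := by
  obtain ⟨n, s, h0, hn, hs⟩ := hBC
  refine ⟨n + 1, fun | 0 => A | i + 1 => s i, rfl, hn, fun i hi => ?_⟩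
  match i with
  | 0 =>
    subst h0
    exact ⟨hAB, fun g hg a ha => (Subgroup.mem_normalizer_iff.mp (hBA hg) a).mp ha⟩
  | i + 1 => exact hs i (by omega)

lemma trans (hAB : IsSubnormalIn A B) (hBC : IsSubnormalIn B C) : IsSubnormalIn A C := by
  obtain ⟨n, s, h0, hn, hs⟩ := hAB
  induction n generalizing A s with
  | zero => subst h0 hn; exact hBC
  | succ n ih =>
    subst h0
    obtain ⟨hle, hconj⟩ := hs 0 n.succ_pos
    refine step hle (fun g hg => Subgroup.mem_normalizer_iff.mpr fun a => ⟨hconj g hg a, ?_⟩)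
      (ih (fun i => s (i + 1)) rfl hn fun i hi => hs (i + 1) (by omega))
    intro ha
    simpa [mul_assoc] using hconj g⁻¹ (inv_mem hg) _ ha

lemma map {G' : Type*} [Group G'] (f : G →* G') (h : IsSubnormalIn A B) :
    IsSubnormalIn (A.map f) (B.map f) := by
  obtain ⟨n, s, rfl, rfl, hs⟩ := h
  refine ⟨n, fun i => (s i).map f, rfl, rfl, fun i hi => ⟨Subgroup.map_mono (hs i hi).1, ?_⟩⟩
  rintro _ ⟨g, hg, rfl⟩ _ ⟨a, ha, rfl⟩
  exact ⟨g * a * g⁻¹, (hs i hi).2 g hg a ha, by simp⟩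

lemma comap {G' : Type*} [Group G'] (f : G' →* G) (h : IsSubnormalIn A B) :
    IsSubnormalIn (A.comap f) (B.comap f) := by
  obtain ⟨n, s, rfl, rfl, hs⟩ := h
  refine ⟨n, fun i => (s i).comap f, rfl, rfl, fun i hi => ⟨Subgroup.comap_mono (hs i hi).1, ?_⟩⟩
  intro g hg a ha
  simpa using (hs i hi).2 _ hg _ ha

lemma of_le_of_le (h : IsSubnormalIn A B) (hAC : A ≤ C) (hCB : C ≤ B) : IsSubnormalIn A C := by
  obtain ⟨n, s, rfl, rfl, hs⟩ := h
  refine ⟨n, fun i => s i ⊓ C, inf_eq_left.mpr hAC, inf_eq_right.mpr hCB, fun i hi =>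
    ⟨inf_le_inf_right C (hs i hi).1, fun g hg a ha => ⟨(hs i hi).2 g hg.1 a ha.1, ?_⟩⟩⟩
  exact C.mul_mem (C.mul_mem hg.2 ha.2) (C.inv_mem hg.2)

lemma top_of_normalizerCondition [Finite G] (hnc : NormalizerCondition G) (H : Subgroup G) :
    IsSubnormalIn H ⊤ := by
  induction H using WellFoundedGT.induction with
  | _ H ih =>
    rcases eq_or_ne H ⊤ with rfl | hH
    · exact refl ⊤
    · exact step H.le_normalizer le_rfl (ih _ (hnc H hH.lt_top))

end IsSubnormalIn

lemma isSubnormalIn_of_isPGroup [Finite G] {p : ℕ} [Fact p.Prime] {K H : Subgroup G}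
    (hK : IsPGroup p K) (hHK : H ≤ K) : IsSubnormalIn H K := by
  have := hK.isNilpotent
  have := (IsSubnormalIn.top_of_normalizerCondition Group.normalizerCondition_of_isNilpotent
    (H.subgroupOf K)).map K.subtype
  rwa [Subgroup.subgroupOf_map_subtype, inf_eq_left.mpr hHK,
    ← MonoidHom.range_eq_map, Subgroup.range_subtype] at this

lemma zpowers_le_closure_pair (g x : G) : Subgroup.zpowers x ≤ Subgroup.closure {g, x} :=
  Subgroup.zpowers_le.mpr (Subgroup.subset_closure (by simp))

lemma map_closure_pair {G' : Type*} [Group G'] (f : G →* G') (g x : G) :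
    (Subgroup.closure {g, x}).map f = Subgroup.closure {f g, f x} := by
  rw [MonoidHom.map_closure, Set.image_pair]

lemma mem_subnormalizer_of_isSubnormalIn {x g : G} {K : Subgroup G}
    (hK : IsSubnormalIn (Subgroup.zpowers x) K) (hgK : Subgroup.closure {g, x} ≤ K) :
    g ∈ subnormalizer x :=
  Subgroup.subset_closure (hK.of_le_of_le (zpowers_le_closure_pair g x) hgK)

lemma map_subnormalizer_le {G' : Type*} [Group G'] (f : G →* G') (x : G) :
    (subnormalizer x).map f ≤ subnormalizer (f x) := by
  rw [subnormalizer, MonoidHom.map_closure]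
  refine Subgroup.closure_mono ?_
  rintro _ ⟨g, hg, rfl⟩
  simpa only [Set.mem_ofPred_eq, MonoidHom.map_zpowers, map_closure_pair] using hg.map f

lemma mem_subnormalizer_of_map {G' : Type*} [Group G'] (f : G →* G') {x g : G}
    (hx : IsSubnormalIn (Subgroup.zpowers x) (Subgroup.zpowers x ⊔ f.ker))
    (hg : IsSubnormalIn (Subgroup.zpowers (f x)) (Subgroup.closure {f g, f x})) :
    g ∈ subnormalizer x := by
  have hpull : IsSubnormalIn (Subgroup.zpowers x ⊔ f.ker) (Subgroup.closure {g, x} ⊔ f.ker) := by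
    simpa only [← MonoidHom.map_zpowers, ← map_closure_pair, Subgroup.comap_map_eq]
      using hg.comap f
  exact mem_subnormalizer_of_isSubnormalIn (hx.trans hpull) le_sup_left

theorem stmt_15 [Fintype G] {p : ℕ} (hp : p.Prime)
    (N : Subgroup G) [N.Normal] (hN : IsPGroup p N)
    (x : G) (hx : ∃ k : ℕ, orderOf x = p ^ k) :
    N ≤ subnormalizer x ∧
      subnormalizer ((x : G ⧸ N)) =
        (subnormalizer x).map (QuotientGroup.mk' N) := by
  have := Fact.mk hp
  obtain ⟨k, hk⟩ := hx
  have hxN : IsPGroup p (Subgroup.zpowers x ⊔ N : Subgroup G) :=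
    (IsPGroup.of_card (by rw [Nat.card_zpowers, hk])).to_sup_of_normal_right hN
  have hbase : IsSubnormalIn (Subgroup.zpowers x) (Subgroup.zpowers x ⊔ N) :=
    isSubnormalIn_of_isPGroup hxN le_sup_left
  refine ⟨fun n hn => mem_subnormalizer_of_isSubnormalIn hbase ?_, le_antisymm ?_ ?_⟩
  · rw [Subgroup.closure_le, Set.insert_subset_iff, Set.singleton_subset_iff]
    exact ⟨Subgroup.mem_sup_right hn, Subgroup.mem_sup_left (Subgroup.mem_zpowers x)⟩
  · refine (Subgroup.closure_le _).mpr fun y hy => ?_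
    obtain ⟨g, rfl⟩ := QuotientGroup.mk'_surjective N y
    exact ⟨g, mem_subnormalizer_of_map (QuotientGroup.mk' N) (by rwa [QuotientGroup.ker_mk']) hy, rfl⟩
  · exact map_subnormalizer_le (QuotientGroup.mk' N) x
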